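/- arXiv:1011.2599 — 3 statements merged into one kernel-verified Lean document; each statement's English description precedes it below -/
import Mathlib

section
/- The Jacobi polynomials satisfy the differential-difference relation [2z∂_z + (α+β)](p_n^{α,β}(z) - p_{n-1}^{α,β}(z)) = (2n+α+β)(p_n^{α,β}(z) + p_{n-1}^{α,β}(z)) for all n ≥ 0, with the convention p_{-1} = 0. -/
open Finset

/-- Shifted factorial (Pochhammer symbol) `(a)_m = a(a+1)⋯(a+m-1)`. -/
noncomputable def poch (a : ℝ) (m : ℕ) : ℝ := ∏ i ∈ Finset.range m, (a + i)

/-- The Jacobi polynomial `p_n^{α,β}(z)` normalized as in the paper. -/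
noncomputable def jacobiP (α β : ℝ) (n : ℕ) (z : ℝ) : ℝ :=
  (-1 : ℝ) ^ n * poch (α + β + 1) n / (Nat.factorial n) *
    ∑ m ∈ Finset.range (n + 1),
      poch (-(n : ℝ)) m * poch ((n : ℝ) + α + β + 1) m /
        (poch (β + 1) m * Nat.factorial m) * z ^ m

/-- Jacobi polynomials indexed by an integer, with the convention `p_n = 0` for `n < 0`. -/
noncomputable def jacobiPZ (α β : ℝ) (n : ℤ) (z : ℝ) : ℝ :=
  if n < 0 then 0 else jacobiP α β n.toNat z

/-! ### Auxiliary lemmas -/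

lemma poch_succ (a : ℝ) (m : ℕ) : poch a (m+1) = poch a m * (a + m) :=
  Finset.prod_range_succ _ _

lemma poch_succ' (a : ℝ) (m : ℕ) : poch a (m+1) = a * poch (a+1) m := by
  unfold poch
  rw [Finset.prod_range_succ']
  simp only [Nat.cast_zero, add_zero]
  rw [mul_comm]
  congr 1
  exact Finset.prod_congr rfl fun i _ => by push_cast; ring

lemma poch_mul (a : ℝ) (m : ℕ) : poch a m * (a + m) = a * poch (a+1) m := by
  rw [← poch_succ, poch_succ']

/-- The coefficient of `z^m` in `jacobiP α β n`. -/
noncomputable def jcoef (α β : ℝ) (n m : ℕ) : ℝ :=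
  (-1 : ℝ) ^ n * poch (α + β + 1) n / (Nat.factorial n) *
    (poch (-(n : ℝ)) m * poch ((n : ℝ) + α + β + 1) m /
      (poch (β + 1) m * Nat.factorial m))

lemma jcoef_eq (α β : ℝ) (n m : ℕ) :
    jcoef α β n m = ((-1:ℝ)^n * poch (α+β+1) n * poch (-(n:ℝ)) m * poch ((n:ℝ)+α+β+1) m) /
      ((Nat.factorial n : ℝ) * (poch (β+1) m * Nat.factorial m)) := by
  unfold jcoef; ring

lemma key (α β : ℝ) (hβ : ∀ j : ℕ, β + 1 + (j : ℝ) ≠ 0) (k m : ℕ) :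
    ((m : ℝ) - ((k : ℝ) + 1)) * jcoef α β (k+1) m
      = ((k : ℝ) + 1 + (m : ℝ) + α + β) * jcoef α β k m := by
  have hQ : poch (β+1) m ≠ 0 := Finset.prod_ne_zero_iff.2 fun i _ => hβ i
  have hm : (Nat.factorial m : ℝ) ≠ 0 := Nat.cast_ne_zero.2 (Nat.factorial_ne_zero m)
  have hk : (Nat.factorial k : ℝ) ≠ 0 := Nat.cast_ne_zero.2 (Nat.factorial_ne_zero k)
  have hk1 : (Nat.factorial (k+1) : ℝ) ≠ 0 := Nat.cast_ne_zero.2 (Nat.factorial_ne_zero _)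
  have h1 : poch (-((k:ℝ)+1)) m * (-((k:ℝ)+1) + m) = (-((k:ℝ)+1)) * poch (-(k:ℝ)) m := by
    have := poch_mul (-((k:ℝ)+1)) m
    rwa [show (-((k:ℝ)+1) + 1) = -(k:ℝ) by ring] at this
  have h2 : poch ((k:ℝ)+α+β+1) m * ((k:ℝ)+α+β+1 + m)
      = ((k:ℝ)+α+β+1) * poch (((k:ℝ)+1)+α+β+1) m := by
    have := poch_mul ((k:ℝ)+α+β+1) m
    rwa [show ((k:ℝ)+α+β+1 + 1) = ((k:ℝ)+1)+α+β+1 by ring] at this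
  have h3 : poch (α+β+1) (k+1) = poch (α+β+1) k * (α+β+1+k) := poch_succ _ _
  have h4 : (Nat.factorial (k+1) : ℝ) = ((k:ℝ)+1) * Nat.factorial k := by
    rw [Nat.factorial_succ]; push_cast; ring
  rw [jcoef_eq, jcoef_eq]
  rw [← mul_div_assoc, ← mul_div_assoc]
  rw [div_eq_div_iff (by positivity) (by positivity)]
  push_cast
  rw [h3, h4]
  linear_combination
    (-(((-1:ℝ)^k * poch (α+β+1) k * (Nat.factorial k:ℝ) * poch (β+1) m * (Nat.factorial m:ℝ))
        * (α+β+1+(k:ℝ)) * poch ((k:ℝ)+1+α+β+1) m)) * h1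
    + (-(((-1:ℝ)^k * poch (α+β+1) k * (Nat.factorial k:ℝ) * poch (β+1) m * (Nat.factorial m:ℝ))
        * ((k:ℝ)+1) * poch (-(k:ℝ)) m)) * h2

lemma jacobiP_eq_sum (α β : ℝ) (n : ℕ) (z : ℝ) :
    jacobiP α β n z = ∑ m ∈ Finset.range (n+1), jcoef α β n m * z ^ m := by
  unfold jacobiP jcoef
  rw [Finset.mul_sum]
  exact Finset.sum_congr rfl fun m _ => by ring

lemma jcoef_top (α β : ℝ) (k : ℕ) : jcoef α β k (k+1) = 0 := by
  unfold jcoef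
  have : poch (-(k:ℝ)) (k+1) = 0 := by
    unfold poch
    exact Finset.prod_eq_zero (Finset.self_mem_range_succ k) (by simp)
  rw [this]; ring

lemma jacobiP_hasDerivAt (α β : ℝ) (n : ℕ) (z : ℝ) :
    HasDerivAt (fun w => jacobiP α β n w)
      (∑ m ∈ Finset.range (n+1), jcoef α β n m * ((m : ℝ) * z ^ (m-1))) z := by
  have h : HasDerivAt (fun w : ℝ => ∑ m ∈ Finset.range (n+1), jcoef α β n m * w ^ m)
      (∑ m ∈ Finset.range (n+1), jcoef α β n m * ((m : ℝ) * z ^ (m-1))) z :=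
    HasDerivAt.fun_sum fun m _ => (hasDerivAt_pow m z).const_mul (jcoef α β n m)
  exact h.congr_of_eventuallyEq (Filter.Eventually.of_forall fun w => jacobiP_eq_sum α β n w)

lemma main_nat (α β : ℝ) (hβ : ∀ j : ℕ, β + 1 + (j : ℝ) ≠ 0) (k : ℕ) (z : ℝ) :
    2 * z * deriv (fun w => jacobiP α β (k+1) w - jacobiP α β k w) z
      + (α + β) * (jacobiP α β (k+1) z - jacobiP α β k z)
      = (2 * ((k : ℝ) + 1) + α + β) * (jacobiP α β (k+1) z + jacobiP α β k z) := by
  have hd := ((jacobiP_hasDerivAt α β (k+1) z).fun_sub (jacobiP_hasDerivAt α β k z)).deriv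
  rw [hd, jacobiP_eq_sum, jacobiP_eq_sum]
  have e1 : ∑ m ∈ Finset.range (k+1), jcoef α β k m * ((m : ℝ) * z ^ (m-1))
      = ∑ m ∈ Finset.range (k+2), jcoef α β k m * ((m : ℝ) * z ^ (m-1)) := by
    rw [Finset.sum_range_succ (n := k+1), jcoef_top]; ring
  have e2 : ∑ m ∈ Finset.range (k+1), jcoef α β k m * z ^ m
      = ∑ m ∈ Finset.range (k+2), jcoef α β k m * z ^ m := by
    rw [Finset.sum_range_succ (n := k+1), jcoef_top]; ring
  rw [e1, e2]
  rw [← Finset.sum_sub_distrib, ← Finset.sum_sub_distrib, ← Finset.sum_add_distrib,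
    Finset.mul_sum, Finset.mul_sum, Finset.mul_sum, ← Finset.sum_add_distrib]
  refine Finset.sum_congr rfl fun m _ => ?_
  have hk := key α β hβ k m
  rcases m with _ | j
  · push_cast at hk ⊢
    linear_combination 2 * hk
  · push_cast at hk ⊢
    linear_combination (2 * z ^ (j+1)) * hk

lemma jacobiP_zero (α β : ℝ) (z : ℝ) : jacobiP α β 0 z = 1 := by
  simp [jacobiP, poch]

theorem jacobi_differential_difference (α β : ℝ)
    (hβ : ∀ j : ℕ, β + 1 + (j : ℝ) ≠ 0)
    (n : ℤ) (hn : 0 ≤ n) (z : ℝ) :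
    2 * z * deriv (fun w => jacobiPZ α β n w - jacobiPZ α β (n - 1) w) z
      + (α + β) * (jacobiPZ α β n z - jacobiPZ α β (n - 1) z)
      = (2 * (n : ℝ) + α + β) * (jacobiPZ α β n z + jacobiPZ α β (n - 1) z) := by
  obtain ⟨N, rfl⟩ := Int.eq_ofNat_of_zero_le hn
  rcases N with _ | K
  · -- n = 0
    have hfun : (fun w => jacobiPZ α β ((0:ℕ):ℤ) w - jacobiPZ α β (((0:ℕ):ℤ) - 1) w)
        = fun _ => (1:ℝ) := by
      funext w
      simp [jacobiPZ, jacobiP_zero]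
    rw [hfun]
    simp [jacobiPZ, jacobiP_zero]
  · -- n = K + 1
    have hT1 : (((K+1:ℕ):ℤ)).toNat = K+1 := by omega
    have hT2 : ((((K+1:ℕ):ℤ)) - 1).toNat = K := by omega
    have h1 : ¬ (((K+1:ℕ):ℤ) < 0) := by omega
    have h3 : ¬ ((((K+1:ℕ):ℤ)) - 1 < 0) := by omega
    have hfun : (fun w => jacobiPZ α β ((K+1:ℕ):ℤ) w - jacobiPZ α β (((K+1:ℕ):ℤ) - 1) w)
        = fun w => jacobiP α β (K+1) w - jacobiP α β K w := by
      funext w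
      rw [jacobiPZ, jacobiPZ, if_neg h1, if_neg h3, hT1, hT2]
    rw [hfun, jacobiPZ, jacobiPZ, if_neg h1, if_neg h3, hT1, hT2]
    have := main_nat α β hβ K z
    push_cast at this ⊢
    linarith [this]
end

section
/- For every polynomial r ∈ ℝ[t] there exists a polynomial r̄ ∈ ℝ[t] such that (r(λ_n) - r(λ_{n-1}))/(λ_n - λ_{n-1}) = r̄(λ_{n-1/2}) as an identity in ℝ[n], where λ_x = x(x+α+β+1); conversely, for every r̄ ∈ ℝ[t] there exists r ∈ ℝ[t], unique up to an additive constant, such that this identity holds, and if r̄ ≠ 0 then deg(r) = deg(r̄) + 1. -/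
open Polynomial

/-- `λ = X(X+α+β+1)` as a polynomial, so that `λ_n = L`, `λ_{n-1} = L.comp (X-1)`,
`λ_{n-1/2} = L.comp (X - 1/2)` as polynomials in `n`. -/
noncomputable def lamPoly (α β : ℝ) : Polynomial ℝ :=
  Polynomial.X * (Polynomial.X + Polynomial.C (α + β + 1))



noncomputable def qs (s : ℝ) : ℕ → Polynomial ℝ
  | 0 => 0
  | 1 => 1
  | (k+2) => (C 2 * X + C (1/2)) * qs s (k+1)
      - (X * X - C (1/2) * X + C (1/16 - s^2/4)) * qs s k

lemma degA (a b : ℝ) (p : Polynomial ℝ) (n : ℕ) (h : p.natDegree ≤ n) :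
    ((C a * X + C b) * p).natDegree ≤ n + 1 := by
  refine (natDegree_mul_le).trans ?_
  have : (C a * X + C b).natDegree ≤ 1 := by compute_degree
  omega

lemma degB (a b : ℝ) (p : Polynomial ℝ) (n : ℕ) (h : p.natDegree ≤ n) :
    ((X * X - C a * X + C b) * p).natDegree ≤ n + 2 := by
  refine (natDegree_mul_le).trans ?_
  have : (X * X - C a * X + C b).natDegree ≤ 2 := by compute_degree
  omega

lemma coeffA (a b : ℝ) (p : Polynomial ℝ) (n : ℕ) :
    ((C a * X + C b) * p).coeff (n+1) = a * p.coeff n + b * p.coeff (n+1) := by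
  rw [add_mul, mul_assoc, coeff_add, coeff_C_mul, coeff_C_mul, coeff_X_mul]

lemma coeffB (a b : ℝ) (p : Polynomial ℝ) (n : ℕ) :
    ((X * X - C a * X + C b) * p).coeff (n+2)
      = p.coeff n - a * p.coeff (n+1) + b * p.coeff (n+2) := by
  rw [add_mul, sub_mul, mul_assoc, mul_assoc, coeff_add, coeff_sub,
    coeff_C_mul, coeff_C_mul, coeff_X_mul, coeff_X_mul, coeff_X_mul]

lemma qs_deg_coeff (s : ℝ) :
    ∀ k, (qs s (k+1)).natDegree ≤ k ∧ (qs s (k+1)).coeff k = (k+1 : ℝ) := by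
  have H : ∀ k, ((qs s (k+1)).natDegree ≤ k ∧ (qs s (k+1)).coeff k = ((k:ℝ)+1)) ∧
      ((qs s (k+2)).natDegree ≤ k+1 ∧ (qs s (k+2)).coeff (k+1) = ((k:ℝ)+2)) := by
    intro k
    induction k with
    | zero =>
      have e2 : qs s 2 = (C 2 * X + C (1/2)) * qs s 1
          - (X * X - C (1/2) * X + C (1/16 - s^2/4)) * qs s 0 := rfl
      have e1 : qs s 1 = 1 := rfl
      have e0 : qs s 0 = 0 := rfl
      rw [e0, mul_zero, sub_zero, e1, mul_one] at e2
      refine ⟨⟨by simp [e1], by simp [e1]⟩, ?_, ?_⟩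
      · rw [e2]; norm_num
      · rw [e2]; norm_num [coeff_C_mul, coeff_C]
    | succ k ih =>
      obtain ⟨h1, h2⟩ := ih
      have hcast : ((k:ℝ)+1) = ((k+1 : ℕ) : ℝ) := by push_cast; ring
      refine ⟨⟨h2.1, by push_cast; exact_mod_cast h2.2⟩, ?_, ?_⟩
      · show ((C 2 * X + C (1/2)) * qs s (k+2)
          - (X * X - C (1/2) * X + C (1/16 - s^2/4)) * qs s (k+1)).natDegree ≤ k+2
        refine (natDegree_sub_le _ _).trans ?_
        refine max_le ((degA _ _ _ _ h2.1).trans (by omega)) ((degB _ _ _ _ h1.1).trans (by omega))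
      · show ((C 2 * X + C (1/2)) * qs s (k+2)
          - (X * X - C (1/2) * X + C (1/16 - s^2/4)) * qs s (k+1)).coeff (k+2) = _
        rw [coeff_sub, coeffA, coeffB, h2.2, h1.2,
          coeff_eq_zero_of_natDegree_lt (lt_of_le_of_lt h2.1 (by omega)),
          coeff_eq_zero_of_natDegree_lt (lt_of_le_of_lt h1.1 (by omega)),
          coeff_eq_zero_of_natDegree_lt (lt_of_le_of_lt h1.1 (by omega))]
        push_cast; ring
  exact fun k => (H k).1

lemma key_s9 (s : ℝ) (L L' M : Polynomial ℝ)
    (h1 : L + L' = ((C 2 * X + C (1/2)) : Polynomial ℝ).comp M)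
    (h2 : L * L' = ((X*X - C (1/2)*X + C (1/16 - s^2/4)) : Polynomial ℝ).comp M) :
    ∀ k, L^k - L'^k = (L - L') * (qs s k).comp M := by
  have H : ∀ k, (L^k - L'^k = (L - L') * (qs s k).comp M) ∧
      (L^(k+1) - L'^(k+1) = (L - L') * (qs s (k+1)).comp M) := by
    intro k
    induction k with
    | zero => exact ⟨by simp [qs], by simp [qs]⟩
    | succ k ih =>
      obtain ⟨ih0, ih1⟩ := ih
      refine ⟨ih1, ?_⟩
      have e : L^(k+2) - L'^(k+2)
          = (L+L')*(L^(k+1)-L'^(k+1)) - (L*L')*(L^k - L'^k) := by ring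
      rw [e, ih1, ih0, h1, h2]
      show _ = (L - L') * (((C 2 * X + C (1/2)) * qs s (k+1)
          - (X * X - C (1/2) * X + C (1/16 - s^2/4)) * qs s k).comp M)
      simp only [sub_comp, mul_comp]
      ring
  exact fun k => (H k).1

lemma Fmain (s : ℝ) (L L' M : Polynomial ℝ)
    (h1 : L + L' = ((C 2 * X + C (1/2)) : Polynomial ℝ).comp M)
    (h2 : L * L' = ((X*X - C (1/2)*X + C (1/16 - s^2/4)) : Polynomial ℝ).comp M) :
    ∀ p : Polynomial ℝ, ∃ pb : Polynomial ℝ,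
      p.comp L - p.comp L' = (L - L') * pb.comp M ∧
      pb.natDegree ≤ p.natDegree - 1 ∧
      pb.coeff (p.natDegree - 1) = p.natDegree * p.leadingCoeff := by
  suffices H : ∀ n : ℕ, ∀ p : Polynomial ℝ, p.natDegree ≤ n → ∃ pb : Polynomial ℝ,
      p.comp L - p.comp L' = (L - L') * pb.comp M ∧
      pb.natDegree ≤ p.natDegree - 1 ∧
      pb.coeff (p.natDegree - 1) = p.natDegree * p.leadingCoeff by
    exact fun p => H p.natDegree p le_rfl
  intro n
  induction n using Nat.strong_induction_on with
  | _ n IH =>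
    intro p hp
    by_cases h0 : p.natDegree = 0
    · refine ⟨0, ?_, by simp, by simp [h0]⟩
      have : p = C (p.coeff 0) := eq_C_of_natDegree_eq_zero h0
      rw [this]; simp
    · have hd : 1 ≤ p.natDegree := Nat.one_le_iff_ne_zero.mpr h0
      obtain ⟨e, he⟩ : ∃ e, p.natDegree = e + 1 := ⟨p.natDegree - 1, by omega⟩
      have hlt : p.eraseLead.natDegree < p.natDegree := by
        have := eraseLead_natDegree_le p; omega
      obtain ⟨pb₁, hb1, hb2, hb3⟩ :=
        IH p.eraseLead.natDegree (lt_of_lt_of_le hlt hp) p.eraseLead le_rfl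
      have hkd := key_s9 s L L' M h1 h2 p.natDegree
      refine ⟨C p.leadingCoeff * qs s p.natDegree + pb₁, ?_, ?_, ?_⟩
      · conv_lhs => rw [← eraseLead_add_C_mul_X_pow p]
        simp only [add_comp, mul_comp, C_comp, pow_comp, X_comp]
        linear_combination hb1 + C p.leadingCoeff * hkd
      · refine (natDegree_add_le _ _).trans (max_le ?_ ?_)
        · refine (natDegree_C_mul_le _ _).trans ?_
          rw [he]; exact (qs_deg_coeff s e).1.trans (by omega)
        · omega
      · rw [he, Nat.add_sub_cancel, coeff_add, coeff_C_mul]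
        have hq := (qs_deg_coeff s e).2
        rw [he] at *
        rw [hq]
        have hz : pb₁.coeff e = 0 := by
          rcases Nat.eq_zero_or_pos e with h | h
          · subst h
            have h1' : p.eraseLead.natDegree = 0 := by omega
            rw [h1'] at hb3
            simpa using hb3
          · exact coeff_eq_zero_of_natDegree_lt (by omega)
        rw [hz]
        push_cast; ring

lemma master (s : ℝ) (L L' M : Polynomial ℝ)
    (h1 : L + L' = ((C 2 * X + C (1/2)) : Polynomial ℝ).comp M)
    (h2 : L * L' = ((X*X - C (1/2)*X + C (1/16 - s^2/4)) : Polynomial ℝ).comp M)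
    (hDne : L - L' ≠ 0) (hM : M.natDegree ≠ 0) :
    (∀ r : Polynomial ℝ, ∃ rb : Polynomial ℝ,
        r.comp L - r.comp L' = (L - L') * rb.comp M) ∧
    (∀ rb : Polynomial ℝ, ∃ r : Polynomial ℝ,
        r.comp L - r.comp L' = (L - L') * rb.comp M) ∧
    (∀ rb r r' : Polynomial ℝ,
        (r.comp L - r.comp L' = (L - L') * rb.comp M) →
        (r'.comp L - r'.comp L' = (L - L') * rb.comp M) →
        ∃ c : ℝ, r' = r + Polynomial.C c) ∧
    (∀ rb r : Polynomial ℝ, rb ≠ 0 →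
        (r.comp L - r.comp L' = (L - L') * rb.comp M) →
        r.natDegree = rb.natDegree + 1) := by
  have hMC : ∀ pb : Polynomial ℝ, pb.comp M = 0 → pb = 0 := by
    intro pb h
    rcases comp_eq_zero_iff.mp h with h' | ⟨_, h'⟩
    · exact h'
    · exact absurd (by rw [h']; simp) hM
  have hinj : ∀ a b : Polynomial ℝ, a.comp M = b.comp M → a = b := by
    intro a b h
    have := hMC (a - b) (by rw [sub_comp, h, sub_self])
    linear_combination this
  refine ⟨?_, ?_, ?_, ?_⟩
  · intro r
    obtain ⟨pb, h, -, -⟩ := Fmain s L L' M h1 h2 r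
    exact ⟨pb, h⟩
  · -- surjectivity
    suffices H : ∀ n : ℕ, ∀ rb : Polynomial ℝ, rb.natDegree ≤ n → ∃ r : Polynomial ℝ,
        r.comp L - r.comp L' = (L - L') * rb.comp M by
      exact fun rb => H rb.natDegree rb le_rfl
    intro n
    induction n with
    | zero =>
      intro rb hb
      refine ⟨C (rb.coeff 0) * X, ?_⟩
      rw [eq_C_of_natDegree_le_zero hb]
      simp only [mul_comp, C_comp, X_comp, coeff_C_zero]
      ring
    | succ n IH =>
      intro rb hb
      by_cases hb' : rb.natDegree ≤ n
      · exact IH rb hb'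
      · have hd : rb.natDegree = n + 1 := by omega
        have hrbne : rb ≠ 0 := fun h => by simp [h] at hd
        have hc : rb.leadingCoeff ≠ 0 := leadingCoeff_ne_zero.mpr hrbne
        set a : ℝ := rb.leadingCoeff / (n + 2) with ha
        have hane : a ≠ 0 := div_ne_zero hc (by positivity)
        obtain ⟨pb, hpb1, hpb2, hpb3⟩ := Fmain s L L' M h1 h2 (C a * X ^ (n + 2))
        have hdeg : (C a * X ^ (n + 2)).natDegree = n + 2 := by
          rw [natDegree_C_mul_X_pow _ _ hane]
        have hlc : (C a * X ^ (n + 2)).leadingCoeff = a := by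
          rw [leadingCoeff, hdeg]; simp
        have e21 : n + 2 - 1 = n + 1 := rfl
        rw [hdeg, e21] at hpb2 hpb3
        rw [hlc] at hpb3
        have hpbtop : pb.coeff (n + 1) = rb.leadingCoeff := by
          rw [hpb3, ha]; push_cast; field_simp
        have hsub : (rb - pb).natDegree ≤ n := by
          refine natDegree_le_iff_coeff_eq_zero.mpr ?_
          intro m hm
          rcases Nat.lt_or_ge (n + 1) m with h | h
          · rw [coeff_sub, coeff_eq_zero_of_natDegree_lt (by omega),
              coeff_eq_zero_of_natDegree_lt (by omega), sub_zero]
          · have hm1 : m = n + 1 := by omega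
            rw [hm1, coeff_sub, hpbtop, ← hd, coeff_natDegree, sub_self]
        obtain ⟨r₂, hr₂⟩ := IH (rb - pb) hsub
        refine ⟨C a * X ^ (n + 2) + r₂, ?_⟩
        simp only [add_comp, sub_comp] at *
        linear_combination hpb1 + hr₂
  · intro rb r r' hr hr'
    obtain ⟨pb, hid, hdeg, hco⟩ := Fmain s L L' M h1 h2 (r' - r)
    have h0 : (L - L') * pb.comp M = 0 := by
      rw [← hid]
      simp only [sub_comp]
      linear_combination hr' - hr
    have hpb0 : pb = 0 := hMC pb ((mul_eq_zero.mp h0).resolve_left hDne)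
    rw [hpb0] at hco
    simp only [coeff_zero] at hco
    have hn0 : (r' - r).natDegree = 0 := by
      by_contra hne
      have hne' : r' - r ≠ 0 := fun h => by simp [h] at hne
      have := leadingCoeff_ne_zero.mpr hne'
      have hcast : ((r' - r).natDegree : ℝ) ≠ 0 := Nat.cast_ne_zero.mpr hne
      exact (mul_ne_zero hcast this) hco.symm
    refine ⟨(r' - r).coeff 0, ?_⟩
    have := eq_C_of_natDegree_eq_zero hn0
    linear_combination this
  · intro rb r hrb hr
    obtain ⟨pb, hid, hdeg, hco⟩ := Fmain s L L' M h1 h2 r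
    have hpbrb : rb = pb := by
      refine hinj _ _ (mul_left_cancel₀ hDne ?_)
      rw [← hid, ← hr]
    have hr0 : r.natDegree ≠ 0 := by
      intro h
      apply hrb
      apply hMC
      refine mul_left_cancel₀ hDne ?_
      rw [← hr, mul_zero]
      rw [eq_C_of_natDegree_eq_zero h]
      simp
    have hrne : r ≠ 0 := fun h => by simp [h] at hr0
    have hcne : rb.coeff (r.natDegree - 1) ≠ 0 := by
      rw [hpbrb, hco]
      exact mul_ne_zero (Nat.cast_ne_zero.mpr hr0) (leadingCoeff_ne_zero.mpr hrne)
    have hge : r.natDegree - 1 ≤ rb.natDegree := le_natDegree_of_ne_zero hcne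
    have hle : rb.natDegree ≤ r.natDegree - 1 := by rw [hpbrb]; exact hdeg
    omega

theorem average_lambda_correspondence (α β : ℝ) :
    (∀ r : Polynomial ℝ, ∃ rb : Polynomial ℝ,
        r.comp (lamPoly α β) - r.comp ((lamPoly α β).comp (Polynomial.X - 1))
          = (lamPoly α β - (lamPoly α β).comp (Polynomial.X - 1)) *
              rb.comp ((lamPoly α β).comp (Polynomial.X - Polynomial.C (1 / 2)))) ∧
    (∀ rb : Polynomial ℝ, ∃ r : Polynomial ℝ,
        r.comp (lamPoly α β) - r.comp ((lamPoly α β).comp (Polynomial.X - 1))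
          = (lamPoly α β - (lamPoly α β).comp (Polynomial.X - 1)) *
              rb.comp ((lamPoly α β).comp (Polynomial.X - Polynomial.C (1 / 2)))) ∧
    (∀ rb r r' : Polynomial ℝ,
        (r.comp (lamPoly α β) - r.comp ((lamPoly α β).comp (Polynomial.X - 1))
          = (lamPoly α β - (lamPoly α β).comp (Polynomial.X - 1)) *
              rb.comp ((lamPoly α β).comp (Polynomial.X - Polynomial.C (1 / 2)))) →
        (r'.comp (lamPoly α β) - r'.comp ((lamPoly α β).comp (Polynomial.X - 1))
          = (lamPoly α β - (lamPoly α β).comp (Polynomial.X - 1)) *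
              rb.comp ((lamPoly α β).comp (Polynomial.X - Polynomial.C (1 / 2)))) →
        ∃ c : ℝ, r' = r + Polynomial.C c) ∧
    (∀ rb r : Polynomial ℝ, rb ≠ 0 →
        (r.comp (lamPoly α β) - r.comp ((lamPoly α β).comp (Polynomial.X - 1))
          = (lamPoly α β - (lamPoly α β).comp (Polynomial.X - 1)) *
              rb.comp ((lamPoly α β).comp (Polynomial.X - Polynomial.C (1 / 2)))) →
        r.natDegree = rb.natDegree + 1) := by
  set s : ℝ := α + β + 1 with hs
  have h1 : lamPoly α β + (lamPoly α β).comp (Polynomial.X - 1)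
      = ((C 2 * X + C (1/2)) : Polynomial ℝ).comp
          ((lamPoly α β).comp (Polynomial.X - Polynomial.C (1 / 2))) := by
    apply Polynomial.funext
    intro x
    simp [lamPoly, eval_comp]
    ring
  have h2 : lamPoly α β * (lamPoly α β).comp (Polynomial.X - 1)
      = ((X*X - C (1/2)*X + C (1/16 - s^2/4)) : Polynomial ℝ).comp
          ((lamPoly α β).comp (Polynomial.X - Polynomial.C (1 / 2))) := by
    apply Polynomial.funext
    intro x
    simp [lamPoly, eval_comp, hs]
    ring
  have hD : lamPoly α β - (lamPoly α β).comp (Polynomial.X - 1)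
      = C 2 * X + C (s - 1) := by
    apply Polynomial.funext
    intro x
    simp [lamPoly, eval_comp, hs]
    ring
  have hDne : lamPoly α β - (lamPoly α β).comp (Polynomial.X - 1) ≠ 0 := by
    rw [hD]
    intro h
    have h' := congrArg (fun p => Polynomial.coeff p 1) h
    simp [coeff_C, coeff_one] at h'
  have hMeq : (lamPoly α β).comp (Polynomial.X - Polynomial.C (1 / 2))
      = X^2 + C (s - 1) * X + C (1/4 - s/2) := by
    apply Polynomial.funext
    intro x
    simp [lamPoly, eval_comp, hs]
    ring
  have hM : ((lamPoly α β).comp (Polynomial.X - Polynomial.C (1 / 2))).natDegree ≠ 0 := by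
    rw [hMeq]
    have : (X^2 + C (s - 1) * X + C (1/4 - s/2) : Polynomial ℝ).natDegree = 2 := by
      compute_degree!
    omega
  exact master s (lamPoly α β) ((lamPoly α β).comp (Polynomial.X - 1))
    ((lamPoly α β).comp (Polynomial.X - Polynomial.C (1 / 2))) h1 h2 hDne hM
end

section
/- There exist differential operators B̄' and B̄'' in the associative algebra generated by D₁ = z∂_z and D₂ = z∂_z² + (β+1)∂_z such that (λ_n + λ_{n-1})(p_n^{α,β} - p_{n-1}^{α,β}) = B̄'(p_n^{α,β} - p_{n-1}^{α,β}) and λ_n λ_{n-1}(p_n^{α,β} - p_{n-1}^{α,β}) = B̄''(p_n^{α,β} - p_{n-1}^{α,β}) for all n ≥ 0; explicitly one may take B̄' = 2B_{α,β} - 2D₁ - (α+β) and B̄'' = B_{α,β}(B_{α,β} - 2D₁ - (α+β)), where B_{α,β} = D₁² + (α+β+1)D₁ - D₂ and λ_n = n(n+α+β+1). -/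
open Finset Polynomial

/-- The Jacobi polynomial `p_n^{α,β}` as an element of `ℝ[X]`. -/
noncomputable def jacobiPoly (α β : ℝ) (n : ℕ) : Polynomial ℝ :=
  Polynomial.C ((-1 : ℝ) ^ n * poch (α + β + 1) n / (Nat.factorial n)) *
    ∑ m ∈ Finset.range (n + 1),
      Polynomial.C (poch (-(n : ℝ)) m * poch ((n : ℝ) + α + β + 1) m /
        (poch (β + 1) m * Nat.factorial m)) * Polynomial.X ^ m

/-- Jacobi polynomials indexed by an integer, with the convention `p_n = 0` for `n < 0`. -/
noncomputable def jacobiPolyZ (α β : ℝ) (n : ℤ) : Polynomial ℝ :=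
  if n < 0 then 0 else jacobiPoly α β n.toNat

/-- The operator `D₁ = z ∂_z` as an endomorphism of `ℝ[X]`. -/
noncomputable def D1op : Module.End ℝ (Polynomial ℝ) :=
  (LinearMap.mulLeft ℝ (Polynomial.X : Polynomial ℝ)).comp Polynomial.derivative

/-- The operator `D₂ = z ∂_z² + (β+1) ∂_z` as an endomorphism of `ℝ[X]`. -/
noncomputable def D2op (β : ℝ) : Module.End ℝ (Polynomial ℝ) :=
  (LinearMap.mulLeft ℝ (Polynomial.X : Polynomial ℝ)).comp
      (Polynomial.derivative.comp Polynomial.derivative)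
    + (β + 1) • (Polynomial.derivative : Polynomial ℝ →ₗ[ℝ] Polynomial ℝ)

namespace JacobiAux

lemma poch_succ (a : ℝ) (m : ℕ) : poch a (m + 1) = poch a m * (a + m) :=
  Finset.prod_range_succ _ _

lemma poch_succ' (a : ℝ) (m : ℕ) : poch a (m + 1) = a * poch (a + 1) m := by
  rw [poch, Finset.prod_range_succ', poch]
  simp only [Nat.cast_zero, add_zero]
  rw [mul_comm]
  congr 1
  apply Finset.prod_congr rfl
  intro i _
  push_cast; ring

lemma poch_shift (a : ℝ) (m : ℕ) : poch a m * (a + m) = a * poch (a + 1) m := by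
  rw [← poch_succ, poch_succ']

lemma poch_beta_ne {β : ℝ} (hβ : ∀ j : ℕ, β + 1 + (j : ℝ) ≠ 0) (m : ℕ) :
    poch (β + 1) m ≠ 0 :=
  Finset.prod_ne_zero_iff.mpr fun i _ => hβ i

noncomputable def jc (α β : ℝ) (n m : ℕ) : ℝ :=
  (-1 : ℝ) ^ n * poch (α + β + 1) n / (Nat.factorial n) *
    (poch (-(n : ℝ)) m * poch ((n : ℝ) + α + β + 1) m /
      (poch (β + 1) m * Nat.factorial m))

lemma jc_eq_zero (α β : ℝ) {n m : ℕ} (h : n < m) : jc α β n m = 0 := by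
  have h0 : poch (-(n : ℝ)) m = 0 := by
    apply Finset.prod_eq_zero (Finset.mem_range.mpr h)
    simp
  simp [jc, h0]

lemma jacobi_coeff (α β : ℝ) (n m : ℕ) : (jacobiPoly α β n).coeff m = jc α β n m := by
  rw [jacobiPoly, Polynomial.coeff_C_mul, Polynomial.finset_sum_coeff]
  simp only [Polynomial.coeff_C_mul, Polynomial.coeff_X_pow]
  by_cases h : m ≤ n
  · rw [Finset.sum_eq_single m]
    · simp [jc]
    · intro b _ hb; simp [Ne.symm hb]
    · intro hm; exact absurd (Finset.mem_range.mpr (Nat.lt_succ_of_le h)) hm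
  · push_neg at h
    rw [jc_eq_zero α β h, Finset.sum_eq_zero, mul_zero]
    intro b hb
    have hb' : m ≠ b := by
      intro e; subst e; exact absurd (Finset.mem_range.mp hb) (by omega)
    simp [hb']

lemma D1_coeff (p : Polynomial ℝ) (m : ℕ) : (D1op p).coeff m = (m : ℝ) * p.coeff m := by
  rw [D1op]
  simp only [LinearMap.comp_apply, LinearMap.mulLeft_apply]
  cases m with
  | zero => simp [Polynomial.mul_coeff_zero]
  | succ k =>
    rw [Polynomial.coeff_X_mul, Polynomial.coeff_derivative]
    push_cast; ring

lemma D2_coeff (β : ℝ) (p : Polynomial ℝ) (m : ℕ) :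
    (D2op β p).coeff m = ((m : ℝ) + 1) * ((m : ℝ) + 1 + β) * p.coeff (m + 1) := by
  rw [D2op]
  simp only [LinearMap.add_apply, LinearMap.comp_apply, LinearMap.mulLeft_apply,
    LinearMap.smul_apply, Polynomial.coeff_add, Polynomial.coeff_smul, smul_eq_mul]
  cases m with
  | zero =>
    rw [Polynomial.mul_coeff_zero]
    simp only [Polynomial.coeff_X_zero, zero_mul, zero_add, Polynomial.coeff_derivative]
    push_cast
    ring
  | succ k =>
    rw [Polynomial.coeff_X_mul, Polynomial.coeff_derivative, Polynomial.coeff_derivative]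
    push_cast; ring

lemma factorial_ne (k : ℕ) : ((Nat.factorial k : ℕ) : ℝ) ≠ 0 := by
  exact_mod_cast Nat.factorial_ne_zero k

lemma R1 (α β : ℝ) (hβ : ∀ j : ℕ, β + 1 + (j : ℝ) ≠ 0) (n m : ℕ) :
    ((m : ℝ) + 1) * (((m : ℝ) + 1) + β) * jc α β n (m + 1)
      = ((m : ℝ) - (n : ℝ)) * ((n : ℝ) + (m : ℝ) + α + β + 1) * jc α β n m := by
  have h1 : poch (β + 1) m ≠ 0 := poch_beta_ne hβ m
  have h2 : ((Nat.factorial m : ℕ) : ℝ) ≠ 0 := factorial_ne m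
  have h3 : β + 1 + (m : ℝ) ≠ 0 := hβ m
  have h4 : ((Nat.factorial n : ℕ) : ℝ) ≠ 0 := factorial_ne n
  have h5 : ((m : ℝ) + 1) ≠ 0 := by positivity
  unfold jc
  rw [poch_succ (-(n : ℝ)) m, poch_succ ((n : ℝ) + α + β + 1) m, poch_succ (β + 1) m,
    Nat.factorial_succ]
  push_cast
  field_simp
  ring

lemma R2 (α β : ℝ) (hβ : ∀ j : ℕ, β + 1 + (j : ℝ) ≠ 0) (k m : ℕ) :
    ((m : ℝ) - ((k : ℝ) + 1)) * jc α β (k + 1) m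
      = ((m : ℝ) + ((k : ℝ) + 1) + α + β) * jc α β k m := by
  induction m with
  | zero =>
    have h4 : ((Nat.factorial k : ℕ) : ℝ) ≠ 0 := factorial_ne k
    have h5 : ((k : ℝ) + 1) ≠ 0 := by positivity
    unfold jc
    rw [poch_succ (α + β + 1) k, Nat.factorial_succ]
    simp only [poch, Finset.range_zero, Finset.prod_empty, Nat.factorial_zero, Nat.cast_one,
      Nat.cast_zero]
    push_cast
    field_simp
    ring
  | succ m ih =>
    have h1 := R1 α β hβ (k + 1) m
    have h2 := R1 α β hβ k m
    have hne1 : ((m : ℝ) + 1) ≠ 0 := by positivity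
    have hne2 : ((m : ℝ) + 1 + β) ≠ 0 := by
      have := hβ m; intro h; apply this; linarith
    have hc : ((m : ℝ) + 1) * ((m : ℝ) + 1 + β) ≠ 0 := mul_ne_zero hne1 hne2
    have key : ((m : ℝ) + 1) * ((m : ℝ) + 1 + β) *
        ((((m : ℝ) + 1) - ((k : ℝ) + 1)) * jc α β (k + 1) (m + 1))
        = ((m : ℝ) + 1) * ((m : ℝ) + 1 + β) *
        ((((m : ℝ) + 1) + ((k : ℝ) + 1) + α + β) * jc α β k (m + 1)) := by
      push_cast at h1 h2 ⊢
      linear_combination ((m : ℝ) - (k : ℝ)) * h1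
        - ((m : ℝ) + (k : ℝ) + 2 + α + β) * h2
        + ((m : ℝ) - (k : ℝ)) * ((k : ℝ) + (m : ℝ) + α + β + 2) * ih
    have := mul_left_cancel₀ hc key
    push_cast
    linear_combination this

lemma eigen (α β : ℝ) (hβ : ∀ j : ℕ, β + 1 + (j : ℝ) ≠ 0) (n : ℕ) :
    (D1op * D1op + (α + β + 1) • D1op - D2op β) (jacobiPoly α β n)
      = ((n : ℝ) * ((n : ℝ) + α + β + 1)) • jacobiPoly α β n := by
  apply Polynomial.ext; intro m
  simp only [LinearMap.sub_apply, LinearMap.add_apply, LinearMap.smul_apply, Module.End.mul_apply,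
    Polynomial.coeff_sub, Polynomial.coeff_add, Polynomial.coeff_smul, smul_eq_mul,
    D1_coeff, D2_coeff, jacobi_coeff]
  linear_combination -(R1 α β hβ n m)

lemma d1id (α β : ℝ) (hβ : ∀ j : ℕ, β + 1 + (j : ℝ) ≠ 0) (k : ℕ) :
    D1op (jacobiPoly α β (k + 1) - jacobiPoly α β k)
      = (((k : ℝ) + 1)) • jacobiPoly α β (k + 1)
        + (((k : ℝ) + 1) + α + β) • jacobiPoly α β k := by
  apply Polynomial.ext; intro m
  rw [map_sub]
  simp only [Polynomial.coeff_sub, Polynomial.coeff_add, Polynomial.coeff_smul, smul_eq_mul,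
    D1_coeff, jacobi_coeff]
  linear_combination R2 α β hβ k m

lemma jacobi_zero (α β : ℝ) : jacobiPoly α β 0 = 1 := by
  simp [jacobiPoly, poch]

lemma D1_one : D1op (1 : Polynomial ℝ) = 0 := by
  simp [D1op]

lemma D2_one (β : ℝ) : D2op β (1 : Polynomial ℝ) = 0 := by
  simp [D2op]

end JacobiAux


open JacobiAux in
theorem exists_operators_for_sum_and_product_of_lambdas (α β : ℝ)
    (hβ : ∀ j : ℕ, β + 1 + (j : ℝ) ≠ 0) :
    ∃ B' B'' : Module.End ℝ (Polynomial ℝ),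
      B' ∈ Algebra.adjoin ℝ {D1op, D2op β} ∧
      B'' ∈ Algebra.adjoin ℝ {D1op, D2op β} ∧
      B' = 2 • (D1op * D1op + (α + β + 1) • D1op - D2op β) - 2 • D1op - (α + β) • (1 : Module.End ℝ (Polynomial ℝ)) ∧
      B'' = (D1op * D1op + (α + β + 1) • D1op - D2op β) *
        ((D1op * D1op + (α + β + 1) • D1op - D2op β) - 2 • D1op - (α + β) • (1 : Module.End ℝ (Polynomial ℝ))) ∧
      ∀ n : ℤ, 0 ≤ n →
        B' (jacobiPolyZ α β n - jacobiPolyZ α β (n - 1))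
          = ((n : ℝ) * ((n : ℝ) + α + β + 1) + ((n : ℝ) - 1) * ((n : ℝ) + α + β)) •
              (jacobiPolyZ α β n - jacobiPolyZ α β (n - 1)) ∧
        B'' (jacobiPolyZ α β n - jacobiPolyZ α β (n - 1))
          = ((n : ℝ) * ((n : ℝ) + α + β + 1) * (((n : ℝ) - 1) * ((n : ℝ) + α + β))) •
              (jacobiPolyZ α β n - jacobiPolyZ α β (n - 1)) := by
    classical
  set Bop : Module.End ℝ (Polynomial ℝ) := D1op * D1op + (α + β + 1) • D1op - D2op β with hBop
  have hD1 : D1op ∈ Algebra.adjoin ℝ {D1op, D2op β} :=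
    Algebra.subset_adjoin (Set.mem_insert _ _)
  have hD2 : D2op β ∈ Algebra.adjoin ℝ {D1op, D2op β} :=
    Algebra.subset_adjoin (Set.mem_insert_of_mem _ rfl)
  have hBm : Bop ∈ Algebra.adjoin ℝ {D1op, D2op β} := by
    apply Subalgebra.sub_mem
    · exact Subalgebra.add_mem _ (Subalgebra.mul_mem _ hD1 hD1)
        (Subalgebra.smul_mem _ hD1 _)
    · exact hD2
  have hone : (1 : Module.End ℝ (Polynomial ℝ)) ∈ Algebra.adjoin ℝ {D1op, D2op β} :=
    Subalgebra.one_mem _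
  refine ⟨2 • Bop - 2 • D1op - (α + β) • 1,
    Bop * (Bop - 2 • D1op - (α + β) • 1), ?_, ?_, rfl, rfl, ?_⟩
  · exact Subalgebra.sub_mem _ (Subalgebra.sub_mem _ (nsmul_mem hBm 2) (nsmul_mem hD1 2))
      (Subalgebra.smul_mem _ hone _)
  · exact Subalgebra.mul_mem _ hBm
      (Subalgebra.sub_mem _ (Subalgebra.sub_mem _ hBm (nsmul_mem hD1 2))
        (Subalgebra.smul_mem _ hone _))
  · intro n hn
    lift n to ℕ using hn
    cases n with
    | zero =>
      have hq0 : jacobiPolyZ α β ((0 : ℕ) : ℤ) = 1 := by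
        simp [jacobiPolyZ, jacobi_zero]
      have hq1 : jacobiPolyZ α β (((0 : ℕ) : ℤ) - 1) = 0 := by
        simp [jacobiPolyZ]
      rw [hq0, hq1, sub_zero]
      have hB1 : Bop (1 : Polynomial ℝ) = 0 := by
        simp [hBop, LinearMap.sub_apply, LinearMap.add_apply, LinearMap.smul_apply,
          Module.End.mul_apply, D1_one, D2_one]
      constructor
      · simp only [LinearMap.sub_apply, LinearMap.smul_apply, Module.End.one_apply,
          hB1, D1_one, smul_zero]
        push_cast
        module
      · rw [Module.End.mul_apply]
        simp only [LinearMap.sub_apply, LinearMap.smul_apply, Module.End.one_apply,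
          hB1, D1_one, smul_zero, zero_sub, sub_zero]
        rw [map_neg, map_smul, hB1]
        push_cast
        module
    | succ k =>
      have hp : jacobiPolyZ α β (((k + 1 : ℕ)) : ℤ) = jacobiPoly α β (k + 1) := by
        rw [jacobiPolyZ, if_neg (by omega : ¬(((k + 1 : ℕ) : ℤ) < 0))]
        norm_num
      have hq : jacobiPolyZ α β ((((k + 1 : ℕ)) : ℤ) - 1) = jacobiPoly α β k := by
        have : (((k + 1 : ℕ)) : ℤ) - 1 = (k : ℤ) := by push_cast; ring
        rw [this, jacobiPolyZ, if_neg (by omega : ¬((k : ℤ) < 0))]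
        norm_num
      rw [hp, hq]
      have e1 := eigen α β hβ (k + 1)
      have e0 := eigen α β hβ k
      have ed := d1id α β hβ k
      rw [← hBop] at e1 e0
      push_cast at e1 ⊢
      have hBsub : Bop (jacobiPoly α β (k + 1) - jacobiPoly α β k)
          = (((k : ℝ) + 1) * (((k : ℝ) + 1) + α + β + 1)) • jacobiPoly α β (k + 1)
            - ((k : ℝ) * ((k : ℝ) + α + β + 1)) • jacobiPoly α β k := by
        rw [map_sub, e1, e0]
      constructor
      · simp only [LinearMap.sub_apply, LinearMap.smul_apply, Module.End.one_apply]
        rw [hBsub, ed]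
        module
      · rw [Module.End.mul_apply]
        simp only [LinearMap.sub_apply, LinearMap.smul_apply, Module.End.one_apply]
        rw [hBsub, ed]
        have inner_eq : (((k : ℝ) + 1) * (((k : ℝ) + 1) + α + β + 1)) • jacobiPoly α β (k + 1)
              - ((k : ℝ) * ((k : ℝ) + α + β + 1)) • jacobiPoly α β k
            - 2 • ((((k : ℝ) + 1)) • jacobiPoly α β (k + 1)
              + (((k : ℝ) + 1) + α + β) • jacobiPoly α β k)
            - (α + β) • (jacobiPoly α β (k + 1) - jacobiPoly α β k)
            = ((k : ℝ) * ((k : ℝ) + α + β + 1)) • jacobiPoly α β (k + 1)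
              - (((k : ℝ) + 1) * (((k : ℝ) + 1) + α + β + 1)) • jacobiPoly α β k := by
          module
        rw [inner_eq, map_sub, map_smul, map_smul, e1, e0]
        module
end
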